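/- If C is a self-orthogonal linear code over R = F₂[v]/(v³ - v) of length n (i.e., C ⊆ C^⊥ with respect to the standard inner product x·y = Σ xᵢyᵢ), then its Gray image ψ(C) ⊆ F₂^{3n} is self-orthogonal with respect to the standard inner product over F₂. -/

import Mathlib

open Polynomial Finset

set_option synthInstance.maxHeartbeats 1000000
set_option maxHeartbeats 1000000

/-- The ring `R = F₂[v]/(v³ - v)`. -/
abbrev R : Type := Polynomial (ZMod 2) ⧸ Ideal.span {(X : Polynomial (ZMod 2))^3 - X}

/-- `v`, the image of the indeterminate in `R`. -/
noncomputable def v : R := Ideal.Quotient.mk _ X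

open Classical in
/-- The Gray map `psi : R -> F2^3`, `psi (a + vb + v^2 c) = (a, b, a+c)`, given by its
table of values on the eight elements of `R`. -/
noncomputable def grayR (r : R) : ZMod 2 × ZMod 2 × ZMod 2 :=
  if r = 0 then (0, 0, 0)
  else if r = 1 then (1, 0, 1)
  else if r = v then (0, 1, 0)
  else if r = v^2 then (0, 0, 1)
  else if r = 1 + v then (1, 1, 1)
  else if r = 1 + v^2 then (1, 0, 0)
  else if r = v + v^2 then (0, 1, 1)
  else (1, 1, 0)

open Classical in
/-- The Lee weight on `R`: the Hamming weight of the Gray image. -/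
noncomputable def leeWt (r : R) : ℕ :=
  if r = 0 then 0
  else if r = v then 1
  else if r = v^2 then 1
  else if r = 1 + v^2 then 1
  else if r = 1 + v then 3
  else 2

/-- The Gray map extended coordinatewise, `Rⁿ → F₂ⁿ × F₂ⁿ × F₂ⁿ = F₂^{3n}`
(the three blocks of the image are the three components). -/
noncomputable def grayV {n : ℕ} (x : Fin n → R) :
    (Fin n → ZMod 2) × (Fin n → ZMod 2) × (Fin n → ZMod 2) :=
  (fun i => (grayR (x i)).1, fun i => (grayR (x i)).2.1, fun i => (grayR (x i)).2.2)

/-- The cyclic shift `(c₀, …, c_{n-1}) ↦ (c_{n-1}, c₀, …, c_{n-2})`. -/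
def shift {α : Type*} {n : ℕ} [NeZero n] (x : Fin n → α) : Fin n → α := fun i => x (i - 1)

/- ## Auxiliary material: a coordinate system for `R` over `F₂`. -/

lemma fne : ((X : Polynomial (ZMod 2))^3 - X) ≠ 0 := by
  intro hf
  have := congrArg (fun p => Polynomial.coeff p 3) hf
  simp [coeff_X] at this

noncomputable def pb : PowerBasis (ZMod 2) R := AdjoinRoot.powerBasis fne

lemma pbdim : pb.dim = 3 := by
  show ((X : Polynomial (ZMod 2))^3 - X).natDegree = 3
  compute_degree!

noncomputable def b : Module.Basis (Fin 3) (ZMod 2) R := pb.basis.reindex (finCongr pbdim)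

lemma b_apply (i : Fin 3) : b i = v ^ (i : ℕ) := by
  rw [b, Module.Basis.reindex_apply, PowerBasis.basis_eq_pow]
  rfl

noncomputable def e : R ≃ₗ[ZMod 2] (Fin 3 → ZMod 2) := b.equivFun

lemma e_symm (t : Fin 3 → ZMod 2) : e.symm t = t 0 • (1:R) + t 1 • v + t 2 • v^2 := by
  rw [e, Module.Basis.equivFun_symm_apply, Fin.sum_univ_three, b_apply, b_apply, b_apply]
  norm_num

lemma e_combo (A B Cc : ZMod 2) : e (A • (1:R) + B • v + Cc • v^2) = ![A, B, Cc] := by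
  have : A • (1:R) + B • v + Cc • v^2 = e.symm ![A, B, Cc] := by
    rw [e_symm]; simp
  rw [this, LinearEquiv.apply_symm_apply]

lemma hv3 : v ^ 3 = v := by
  have : v ^ 3 - v = 0 := by
    show Ideal.Quotient.mk _ X ^ 3 - Ideal.Quotient.mk _ X = 0
    rw [← map_pow, ← map_sub, Ideal.Quotient.eq_zero_iff_mem]
    exact Ideal.subset_span rfl
  linear_combination this

lemma hvv : v * v = v ^ 2 := by ring
lemma hvv2 : v * v ^ 2 = v := by rw [show v * v ^ 2 = v ^ 3 from by ring, hv3]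
lemma hv2v : v ^ 2 * v = v := by rw [show v ^ 2 * v = v ^ 3 from by ring, hv3]
lemma hv2v2 : v ^ 2 * v ^ 2 = v ^ 2 := by
  have : v ^ 2 * v ^ 2 = v ^ 3 * v := by ring
  rw [this, hv3, hvv]

lemma mul_expand (t u : Fin 3 → ZMod 2) :
    e.symm t * e.symm u =
      (t 0 * u 0) • (1:R) + (t 0 * u 1 + t 1 * u 0 + t 1 * u 2 + t 2 * u 1) • v
        + (t 0 * u 2 + t 1 * u 1 + t 2 * u 0 + t 2 * u 2) • v ^ 2 := by
  rw [e_symm, e_symm]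
  simp only [add_mul, mul_add, smul_mul_smul_comm, one_mul, mul_one, hvv, hvv2, hv2v, hv2v2]
  module

lemma e_mul (t u : Fin 3 → ZMod 2) :
    e (e.symm t * e.symm u) 2 = t 0 * u 2 + t 1 * u 1 + t 2 * u 0 + t 2 * u 2 := by
  rw [mul_expand, e_combo]
  simp

lemma he1 : e 1 = ![1,0,0] := by simpa using e_combo 1 0 0
lemma hev : e v = ![0,1,0] := by simpa using e_combo 0 1 0
lemma hev2 : e (v^2) = ![0,0,1] := by simpa using e_combo 0 0 1
lemma he1v : e (1+v) = ![1,1,0] := by simpa using e_combo 1 1 0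
lemma he1v2 : e (1+v^2) = ![1,0,1] := by simpa using e_combo 1 0 1
lemma hevv2 : e (v+v^2) = ![0,1,1] := by simpa using e_combo 0 1 1

lemma gray_eval (t : Fin 3 → ZMod 2) : grayR (e.symm t) = (t 0, t 1, t 0 + t 2) := by
  have hrep : t = ![t 0, t 1, t 2] := by funext i; fin_cases i <;> rfl
  have h01 : ∀ a : ZMod 2, a = 0 ∨ a = 1 := by decide
  rcases h01 (t 0) with h0|h0 <;> rcases h01 (t 1) with h1|h1 <;> rcases h01 (t 2) with h2|h2 <;>
    rw [hrep, h0, h1, h2, grayR] <;>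
    simp only [LinearEquiv.symm_apply_eq, map_zero, he1, hev, hev2, he1v, he1v2, hevv2] <;>
    simp (config := { decide := true })

/-- The key pointwise identity: the binary inner product of Gray images is the `v²`-coordinate
of the product. -/
lemma gray_mul_key (r s : R) :
    (grayR r).1 * (grayR s).1 + (grayR r).2.1 * (grayR s).2.1
      + (grayR r).2.2 * (grayR s).2.2 = e (r * s) 2 := by
  obtain ⟨t, rfl⟩ : ∃ t, e.symm t = r := ⟨e r, e.symm_apply_apply r⟩
  obtain ⟨u, rfl⟩ : ∃ u, e.symm u = s := ⟨e s, e.symm_apply_apply s⟩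
  rw [gray_eval, gray_eval, e_mul]
  have h01 : ∀ a : ZMod 2, a = 0 ∨ a = 1 := by decide
  rcases h01 (t 0) with h0|h0 <;> rcases h01 (t 1) with h1|h1 <;> rcases h01 (t 2) with h2|h2 <;>
    rcases h01 (u 0) with g0|g0 <;> rcases h01 (u 1) with g1|g1 <;> rcases h01 (u 2) with g2|g2 <;>
    rw [h0, h1, h2, g0, g1, g2] <;> decide

/-- If `C` is a self-orthogonal linear code over `R`, then its Gray image is a
self-orthogonal binary code. -/
theorem gray_self_orthogonal {n : ℕ} (C : Submodule R (Fin n → R))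
    (h : ∀ x ∈ C, ∀ y ∈ C, ∑ i, x i * y i = 0) :
    ∀ x ∈ C, ∀ y ∈ C,
      (∑ i, (grayV x).1 i * (grayV y).1 i)
        + (∑ i, (grayV x).2.1 i * (grayV y).2.1 i)
        + (∑ i, (grayV x).2.2 i * (grayV y).2.2 i) = 0 := by
  intro x hx y hy
  have hsum := h x hx y hy
  rw [← Finset.sum_add_distrib, ← Finset.sum_add_distrib]
  have : ∀ i : Fin n,
      (grayV x).1 i * (grayV y).1 i + (grayV x).2.1 i * (grayV y).2.1 i
        + (grayV x).2.2 i * (grayV y).2.2 i = e (x i * y i) 2 := fun i =>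
    gray_mul_key (x i) (y i)
  rw [Finset.sum_congr rfl fun i _ => this i]
  have h2 : ∑ i, e (x i * y i) 2 = e (∑ i, x i * y i) 2 := by
    rw [map_sum]
    simp [Finset.sum_apply]
  rw [h2, hsum, map_zero]
  rfl
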